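/- arXiv:math/0609383 — 2 statements merged into one kernel-verified Lean document; each statement's English description precedes it below -/
import Mathlib

section
/- Let K be an algebraically closed field complete with respect to a nontrivial non-archimedean absolute value. For each u ∈ ℝ^n, the map sending a Laurent polynomial Σ a_m x^m over K to max_m |a_m| e^{-m·u} is a multiplicative norm on the Laurent polynomial ring K[x_1^{±1},...,x_n^{±1}]. -/
/-!
Write `‖f‖ = max_m |f_m| e^{-ℓ(m)}` for an additive `ℓ` (here `ℓ(m) = m·u`), so that the weight
of `x^{a+b}` is the product of the weights of `x^a` and `x^b`. The ultrametric inequality then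
gives `‖f g‖ ≤ ‖f‖ ‖g‖`. For the reverse inequality, let `A` and `B` be the sets of exponents at
which the weighted coefficients of `f` and `g` attain their maxima. Since `ℤⁿ` has unique sums
(take the lexicographically largest elements), some `a₀ + b₀` with `a₀ ∈ A`, `b₀ ∈ B` is written
in only one way as a sum of an element of `A` and one of `B`. In the coefficient of `x^{a₀+b₀}`
in `f g` the term `f_{a₀} g_{b₀}` then strictly dominates all others, so the ultrametric
absolute value of that coefficient is exactly `|f_{a₀}| |g_{b₀}|`.
-/

open Finset

namespace AddMonoidAlgebra

section Semiring

variable {R M : Type*} [Semiring R] [AddZeroClass M] (abv : AbsoluteValue R ℝ) (ℓ : M →+ ℝ)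

noncomputable def gaussTerm (f : AddMonoidAlgebra R M) (m : M) : ℝ :=
  abv (f.coeff m) * Real.exp (-ℓ m)

noncomputable def gaussNorm (f : AddMonoidAlgebra R M) : ℝ :=
  ⨆ m, gaussTerm abv ℓ f m

open Classical in
noncomputable def dominantSupport (f : AddMonoidAlgebra R M) : Finset M :=
  {m ∈ f.coeff.support | gaussTerm abv ℓ f m = gaussNorm abv ℓ f}

variable {abv ℓ}

lemma gaussTerm_nonneg (f : AddMonoidAlgebra R M) (m : M) : 0 ≤ gaussTerm abv ℓ f m :=
  mul_nonneg (abv.nonneg _) (Real.exp_pos _).le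

lemma gaussTerm_pos {f : AddMonoidAlgebra R M} {m : M} (hm : m ∈ f.coeff.support) :
    0 < gaussTerm abv ℓ f m :=
  mul_pos (abv.pos (Finsupp.mem_support_iff.1 hm)) (Real.exp_pos _)

lemma gaussTerm_eq_zero_of_notMem {f : AddMonoidAlgebra R M} {m : M}
    (hm : m ∉ f.coeff.support) : gaussTerm abv ℓ f m = 0 := by
  rw [gaussTerm, Finsupp.notMem_support_iff.1 hm, map_zero, zero_mul]

lemma gaussTerm_mul_gaussTerm (f g : AddMonoidAlgebra R M) (a b : M) :
    gaussTerm abv ℓ f a * gaussTerm abv ℓ g b =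
      abv (f.coeff a * g.coeff b) * Real.exp (-ℓ (a + b)) := by
  rw [gaussTerm, gaussTerm, map_mul, map_add, neg_add, Real.exp_add]
  ring

lemma bddAbove_range_gaussTerm (f : AddMonoidAlgebra R M) :
    BddAbove (Set.range (gaussTerm abv ℓ f)) := by
  refine ((f.coeff.support.finite_toSet.image (gaussTerm abv ℓ f)).insert 0).bddAbove.mono ?_
  rintro _ ⟨m, rfl⟩
  by_cases hm : m ∈ f.coeff.support
  · exact Or.inr ⟨m, hm, rfl⟩
  · exact Or.inl (gaussTerm_eq_zero_of_notMem hm)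

lemma gaussTerm_le_gaussNorm (f : AddMonoidAlgebra R M) (m : M) :
    gaussTerm abv ℓ f m ≤ gaussNorm abv ℓ f :=
  le_ciSup (bddAbove_range_gaussTerm f) m

lemma gaussNorm_le {f : AddMonoidAlgebra R M} {c : ℝ} (h : ∀ m, gaussTerm abv ℓ f m ≤ c) :
    gaussNorm abv ℓ f ≤ c :=
  ciSup_le h

lemma gaussNorm_nonneg (f : AddMonoidAlgebra R M) : 0 ≤ gaussNorm abv ℓ f :=
  (gaussTerm_nonneg f 0).trans (gaussTerm_le_gaussNorm f 0)

@[simp]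
lemma gaussNorm_zero : gaussNorm abv ℓ (0 : AddMonoidAlgebra R M) = 0 :=
  le_antisymm (gaussNorm_le fun m => by simp [gaussTerm]) (gaussNorm_nonneg 0)

lemma gaussNorm_single_zero (c : R) : gaussNorm abv ℓ (single (0 : M) c) = abv c := by
  refine le_antisymm (gaussNorm_le fun m => ?_) ?_
  · by_cases hm : m = 0
    · simp [gaussTerm, hm, coeff_single]
    · simp [gaussTerm, coeff_single, Ne.symm hm]
  · simpa [gaussTerm, coeff_single] using gaussTerm_le_gaussNorm (abv := abv) (ℓ := ℓ)
      (single (0 : M) c) 0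

lemma gaussNorm_add_le (hna : IsNonarchimedean abv) (f g : AddMonoidAlgebra R M) :
    gaussNorm abv ℓ (f + g) ≤ max (gaussNorm abv ℓ f) (gaussNorm abv ℓ g) := by
  refine gaussNorm_le fun m => ?_
  calc gaussTerm abv ℓ (f + g) m
      ≤ max (abv (f.coeff m)) (abv (g.coeff m)) * Real.exp (-ℓ m) :=
        mul_le_mul_of_nonneg_right (hna _ _) (Real.exp_pos _).le
    _ = max (gaussTerm abv ℓ f m) (gaussTerm abv ℓ g m) :=
        max_mul_of_nonneg _ _ (Real.exp_pos _).le
    _ ≤ max (gaussNorm abv ℓ f) (gaussNorm abv ℓ g) :=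
        max_le_max (gaussTerm_le_gaussNorm f m) (gaussTerm_le_gaussNorm g m)

lemma coeff_mul_eq_sum_filter [DecidableEq M] (f g : AddMonoidAlgebra R M) (m : M) :
    (f * g).coeff m = ∑ p ∈ f.coeff.support ×ˢ g.coeff.support with p.1 + p.2 = m,
      f.coeff p.1 * g.coeff p.2 := by
  rw [coeff_mul, Finset.sum_filter, Finset.sum_product]
  rfl

lemma gaussNorm_mul_le (hna : IsNonarchimedean abv) (f g : AddMonoidAlgebra R M) :
    gaussNorm abv ℓ (f * g) ≤ gaussNorm abv ℓ f * gaussNorm abv ℓ g := by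
  classical
  refine gaussNorm_le fun m => ?_
  rcases ((f.coeff.support ×ˢ g.coeff.support).filter fun p => p.1 + p.2 = m).eq_empty_or_nonempty
    with hs | hs
  · simpa [gaussTerm, coeff_mul_eq_sum_filter, hs]
      using mul_nonneg (gaussNorm_nonneg f) (gaussNorm_nonneg g)
  obtain ⟨p, hp, hle⟩ := hna.finset_image_add_of_nonempty (fun p => f.coeff p.1 * g.coeff p.2) hs
  have hpm : p.1 + p.2 = m := (mem_filter.1 hp).2
  calc gaussTerm abv ℓ (f * g) m
      ≤ abv (f.coeff p.1 * g.coeff p.2) * Real.exp (-ℓ m) := by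
        rw [gaussTerm, coeff_mul_eq_sum_filter]
        gcongr
    _ = gaussTerm abv ℓ f p.1 * gaussTerm abv ℓ g p.2 := by rw [gaussTerm_mul_gaussTerm, hpm]
    _ ≤ gaussNorm abv ℓ f * gaussNorm abv ℓ g :=
        mul_le_mul (gaussTerm_le_gaussNorm f _) (gaussTerm_le_gaussNorm g _)
          (gaussTerm_nonneg g _) (gaussNorm_nonneg f)

lemma dominantSupport_nonempty {f : AddMonoidAlgebra R M} (hf : f ≠ 0) :
    (dominantSupport abv ℓ f).Nonempty := by
  have hsupp : f.coeff.support.Nonempty := Finsupp.support_nonempty_iff.2 (by simpa using hf)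
  obtain ⟨m, hm, hmax⟩ := f.coeff.support.exists_max_image (gaussTerm abv ℓ f) hsupp
  refine ⟨m, mem_filter.2 ⟨hm, (gaussTerm_le_gaussNorm f m).antisymm (gaussNorm_le fun m' => ?_)⟩⟩
  by_cases hm' : m' ∈ f.coeff.support
  · exact hmax m' hm'
  · exact (gaussTerm_eq_zero_of_notMem hm').trans_le (gaussTerm_nonneg f m)

lemma gaussTerm_lt_gaussNorm {f : AddMonoidAlgebra R M} {m : M} (hm : m ∈ f.coeff.support)
    (hm' : m ∉ dominantSupport abv ℓ f) : gaussTerm abv ℓ f m < gaussNorm abv ℓ f :=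
  (gaussTerm_le_gaussNorm f m).lt_of_ne fun h => hm' (mem_filter.2 ⟨hm, h⟩)

lemma gaussTerm_mul_gaussTerm_lt {f g : AddMonoidAlgebra R M} {a b : M}
    (ha : a ∈ f.coeff.support) (hb : b ∈ g.coeff.support)
    (hab : a ∉ dominantSupport abv ℓ f ∨ b ∉ dominantSupport abv ℓ g) :
    gaussTerm abv ℓ f a * gaussTerm abv ℓ g b < gaussNorm abv ℓ f * gaussNorm abv ℓ g := by
  rcases hab with ha' | hb'
  · exact mul_lt_mul_of_lt_of_le_of_nonneg_of_pos (gaussTerm_lt_gaussNorm ha ha')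
      (gaussTerm_le_gaussNorm g b) (gaussTerm_nonneg f a)
      ((gaussTerm_pos hb).trans_le (gaussTerm_le_gaussNorm g b))
  · exact mul_lt_mul_of_le_of_lt_of_nonneg_of_pos (gaussTerm_le_gaussNorm f a)
      (gaussTerm_lt_gaussNorm hb hb') (gaussTerm_nonneg g b)
      ((gaussTerm_pos ha).trans_le (gaussTerm_le_gaussNorm f a))

end Semiring

section Ring

variable {R M : Type*} [Ring R] [AddZeroClass M] {abv : AbsoluteValue R ℝ} {ℓ : M →+ ℝ}

lemma gaussTerm_mul_add_of_uniqueAdd (hna : IsNonarchimedean abv) {f g : AddMonoidAlgebra R M}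
    {a₀ b₀ : M} (ha₀ : a₀ ∈ dominantSupport abv ℓ f) (hb₀ : b₀ ∈ dominantSupport abv ℓ g)
    (huniq : UniqueAdd (dominantSupport abv ℓ f) (dominantSupport abv ℓ g) a₀ b₀) :
    gaussTerm abv ℓ (f * g) (a₀ + b₀) = gaussNorm abv ℓ f * gaussNorm abv ℓ g := by
  classical
  obtain ⟨ha₀f, hfa₀⟩ := mem_filter.1 ha₀
  obtain ⟨hb₀g, hgb₀⟩ := mem_filter.1 hb₀
  set s := (f.coeff.support ×ˢ g.coeff.support).filter fun p => p.1 + p.2 = a₀ + b₀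
  have hk : (a₀, b₀) ∈ s := mem_filter.2 ⟨mem_product.2 ⟨ha₀f, hb₀g⟩, rfl⟩
  have hdom : ∀ p ∈ s, p ≠ (a₀, b₀) →
      abv (f.coeff p.1 * g.coeff p.2) < abv (f.coeff a₀ * g.coeff b₀) := by
    intro p hp hne
    obtain ⟨hps, hpsum⟩ := mem_filter.1 hp
    obtain ⟨hp₁, hp₂⟩ := mem_product.1 hps
    have hlt := gaussTerm_mul_gaussTerm_lt hp₁ hp₂
      (not_and_or.1 fun h => hne (Prod.ext_iff.2 (huniq h.1 h.2 hpsum)))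
    rw [gaussTerm_mul_gaussTerm, hpsum, ← hfa₀, ← hgb₀, gaussTerm_mul_gaussTerm] at hlt
    exact lt_of_mul_lt_mul_right hlt (Real.exp_pos _).le
  rw [gaussTerm, coeff_mul_eq_sum_filter, hna.apply_sum_eq_of_lt (fun a => (abv.map_neg a).symm)
    hk hdom, ← hfa₀, ← hgb₀, gaussTerm_mul_gaussTerm]

lemma le_gaussNorm_mul [UniqueSums M] (hna : IsNonarchimedean abv)
    (f g : AddMonoidAlgebra R M) :
    gaussNorm abv ℓ f * gaussNorm abv ℓ g ≤ gaussNorm abv ℓ (f * g) := by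
  rcases eq_or_ne f 0 with rfl | hf
  · simp
  rcases eq_or_ne g 0 with rfl | hg
  · simp
  obtain ⟨a₀, ha₀, b₀, hb₀, huniq⟩ :=
    UniqueSums.uniqueAdd_of_nonempty (dominantSupport_nonempty hf) (dominantSupport_nonempty hg)
  exact (gaussTerm_mul_add_of_uniqueAdd hna ha₀ hb₀ huniq).symm.trans_le
    (gaussTerm_le_gaussNorm _ _)

lemma gaussNorm_mul [UniqueSums M] (hna : IsNonarchimedean abv) (f g : AddMonoidAlgebra R M) :
    gaussNorm abv ℓ (f * g) = gaussNorm abv ℓ f * gaussNorm abv ℓ g :=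
  (gaussNorm_mul_le hna f g).antisymm (le_gaussNorm_mul hna f g)

end Ring

end AddMonoidAlgebra

def Pi.intPairing {ι : Type*} [Fintype ι] (u : ι → ℝ) : (ι → ℤ) →+ ℝ where
  toFun m := ∑ j, (m j : ℝ) * u j
  map_zero' := by simp
  map_add' a b := by simp [add_mul, Finset.sum_add_distrib]

theorem gauss_norm_multiplicative_general (K : Type*) [Field K]
    (abv : AbsoluteValue K ℝ)
    (hna : ∀ x y : K, abv (x + y) ≤ max (abv x) (abv y))
    (n : ℕ) (u : Fin n → ℝ)
    (Nu : AddMonoidAlgebra K (Fin n → ℤ) → ℝ)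
    (hNu : ∀ f, Nu f = ⨆ m : Fin n → ℤ,
      abv (f.coeff m) * Real.exp (-(∑ j, (m j : ℝ) * u j))) :
    (∀ f g, Nu (f * g) = Nu f * Nu g) ∧
    (∀ f g, Nu (f + g) ≤ max (Nu f) (Nu g)) ∧
    (∀ c : K, Nu (AddMonoidAlgebra.single (0 : Fin n → ℤ) c) = abv c) := by
  obtain rfl : Nu = AddMonoidAlgebra.gaussNorm abv (Pi.intPairing u) := funext hNu
  exact ⟨AddMonoidAlgebra.gaussNorm_mul hna, AddMonoidAlgebra.gaussNorm_add_le hna,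
    AddMonoidAlgebra.gaussNorm_single_zero⟩

/-- Let `K` be an algebraically closed field, complete with respect to a
nontrivial non-archimedean absolute value. For each `u ∈ ℝ^n`, the map sending a Laurent
polynomial `Σ a_m x^m` over `K` (an element of the Laurent polynomial ring
`AddMonoidAlgebra K (Fin n → ℤ)`) to `max_m |a_m| e^{-m·u}` is a multiplicative norm:
it is multiplicative on products, satisfies the ultrametric triangle inequality, and
extends the absolute value on constants. -/
theorem gauss_norm_multiplicative (K : Type*) [Field K] [IsAlgClosed K]
    (abv : AbsoluteValue K ℝ)
    (hna : ∀ x y : K, abv (x + y) ≤ max (abv x) (abv y))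
    (hnontrivial : ∃ x : K, abv x ≠ 0 ∧ abv x ≠ 1)
    (hcomplete : ∀ s : ℕ → K,
      (∀ ε : ℝ, 0 < ε → ∃ N, ∀ p ≥ N, ∀ q ≥ N, abv (s p - s q) < ε) →
      ∃ L : K, ∀ ε : ℝ, 0 < ε → ∃ N, ∀ p ≥ N, abv (s p - L) < ε)
    (n : ℕ) (u : Fin n → ℝ)
    (Nu : AddMonoidAlgebra K (Fin n → ℤ) → ℝ)
    (hNu : ∀ f, Nu f = ⨆ m : Fin n → ℤ,
      abv (f.coeff m) * Real.exp (-(∑ j, (m j : ℝ) * u j))) :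
    (∀ f g, Nu (f * g) = Nu f * Nu g) ∧
    (∀ f g, Nu (f + g) ≤ max (Nu f) (Nu g)) ∧
    (∀ c : K, Nu (AddMonoidAlgebra.single (0 : Fin n → ℤ) c) = abv c) :=
  gauss_norm_multiplicative_general K abv hna n u Nu hNu
end

section
/- Let F ⊂ ℝ^d be a bounded fundamental domain of a complete lattice Λ_0 (so ℝ^d is the disjoint union of λ + F, λ ∈ Λ_0) and let Ω ⊂ ℝ^d be a bounded measurable set whose boundary has measure zero. Then the number N_m of lattice points λ ∈ (1/m)Λ_0 with λ + (1/m)F ⊂ Ω satisfies lim_{m→∞} N_m / m^d = vol(Ω) / vol(F). -/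
/-!
Scaled by `r = 1/m`, the translates `r • (l + F)`, `l ∈ Λ₀`, tile space by pairwise disjoint
pieces of volume `r^d vol F`, and `N_m` counts those lying inside `Ω`; hence
`N_m r^d vol F ≤ vol Ω`. Since `vol F > 0` (countably many translates of `F` cover space), this
also shows that the count is finite. A point of `Ω` in a piece not contained in `Ω` is within
`r diam F` of a point outside `Ω`, hence of `∂Ω`, so
`vol Ω ≤ N_m r^d vol F + vol (cthickening (r diam F) ∂Ω)`, and the last term tends to
`vol ∂Ω = 0` as `r → 0`.
-/

open MeasureTheory Filter Function Metric Topology Pointwise Module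
open scoped ENNReal

section Frontier

variable {E : Type*} [NormedAddCommGroup E] [NormedSpace ℝ E] [FiniteDimensional ℝ E]

theorem mem_cthickening_frontier_of_dist_le {Ω : Set E} {x y : E} {δ : ℝ} (hx : x ∈ Ω)
    (hy : y ∉ Ω) (hxy : dist x y ≤ δ) : x ∈ cthickening δ (frontier Ω) := by
  obtain ⟨p, hp, hxp⟩ :=
    exists_mem_frontier_infDist_compl_eq_dist hx fun h => hy (h ▸ Set.mem_univ y)
  exact mem_cthickening_of_dist_le x p δ _ hp (hxp ▸ (infDist_le_dist_of_mem hy).trans hxy)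

end Frontier

theorem ENNReal.toReal_natCast_mul_ofReal_mul (n : ℕ) {a : ℝ} (ha : 0 ≤ a) (b : ℝ≥0∞) :
    (n * (ENNReal.ofReal a * b)).toReal = n * a * b.toReal := by
  simp [ENNReal.toReal_mul, ha, mul_assoc]

section Tiling

variable {E : Type*} [NormedAddCommGroup E] [NormedSpace ℝ E]

def TilesByTranslates (F Λ : Set E) : Prop :=
  ∀ x : E, ∃! l : Λ, x - (l : E) ∈ F

/-- With `r = 1/m`, the tile `r • (l +ᵥ F)` is the paper's `λ + (1/m)F` for `λ = l/m`. -/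
def tilesInside (Λ F Ω : Set E) (r : ℝ) : Set Λ :=
  {l | r • ((l : E) +ᵥ F) ⊆ Ω}

variable {Λ F Ω : Set E} {r : ℝ}

theorem mem_tilesInside_iff {l : Λ} :
    l ∈ tilesInside Λ F Ω r ↔ ∀ x ∈ F, r • ((l : E) + x) ∈ Ω := by
  simp only [tilesInside, Set.mem_ofPred_eq, Set.smul_set_subset_iff, ← Set.image_vadd,
    Set.forall_mem_image, vadd_eq_add]

namespace TilesByTranslates

theorem pairwise_disjoint_smul_vadd (hF : TilesByTranslates F Λ) (hr : r ≠ 0) :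
    Pairwise (Disjoint on (fun l : Λ => r • ((l : E) +ᵥ F))) := by
  intro l l' hne
  refine Set.disjoint_left.2 fun z hz hz' => hne ?_
  obtain ⟨_, ⟨x, hx, rfl⟩, rfl⟩ := hz
  obtain ⟨_, ⟨y, hy, rfl⟩, hyz⟩ := hz'
  have hxy : (l' : E) + y = l + x := smul_right_injective E hr hyz
  obtain ⟨_, _, huniq⟩ := hF ((l : E) + x)
  exact (huniq l (by simpa using hx)).trans (huniq l' (by simpa [← hxy] using hy)).symm

theorem exists_mem_smul_vadd (hF : TilesByTranslates F Λ) (hr : r ≠ 0) (x : E) :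
    ∃ l : Λ, x ∈ r • ((l : E) +ᵥ F) := by
  obtain ⟨l, hl, -⟩ := hF (r⁻¹ • x)
  exact ⟨l, r⁻¹ • x, ⟨_, hl, add_sub_cancel _ _⟩, smul_inv_smul₀ hr x⟩

variable [FiniteDimensional ℝ E] [MeasurableSpace E] [BorelSpace E]
  (μ : Measure E) [μ.IsAddHaarMeasure]

theorem measure_ne_zero [Countable Λ] (hF : TilesByTranslates F Λ) : μ F ≠ 0 := by
  intro hF0
  have hcover : (Set.univ : Set E) ⊆ ⋃ l : Λ, (l : E) +ᵥ F := fun x _ =>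
    Set.mem_iUnion.2 (by simpa using hF.exists_mem_smul_vadd one_ne_zero x)
  refine (isOpen_univ.measure_pos μ Set.univ_nonempty).ne' <|
    measure_mono_null hcover (measure_iUnion_null fun l => ?_)
  rwa [measure_vadd]

theorem measure_biUnion_smul_vadd (hF : TilesByTranslates F Λ) (hFm : MeasurableSet F)
    (hr : 0 < r) (s : Finset Λ) :
    μ (⋃ l ∈ s, r • ((l : E) +ᵥ F)) =
      s.card * (ENNReal.ofReal (r ^ finrank ℝ E) * μ F) := by
  rw [measure_biUnion_finset ((hF.pairwise_disjoint_smul_vadd hr.ne').set_pairwise _)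
    fun l _ => (hFm.const_vadd _).const_smul₀ _]
  simp [Measure.addHaar_smul_of_nonneg μ hr.le, measure_vadd]

theorem card_mul_le_measure (hF : TilesByTranslates F Λ) (hFm : MeasurableSet F) (hr : 0 < r)
    {s : Finset Λ} (hs : ↑s ⊆ tilesInside Λ F Ω r) :
    s.card * (ENNReal.ofReal (r ^ finrank ℝ E) * μ F) ≤ μ Ω := by
  rw [← hF.measure_biUnion_smul_vadd μ hFm hr]
  exact measure_mono (Set.iUnion₂_subset fun l hl => hs hl)

theorem finite_tilesInside [Countable Λ] (hF : TilesByTranslates F Λ) (hFm : MeasurableSet F)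
    (hΩ : μ Ω ≠ ∞) (hr : 0 < r) : (tilesInside Λ F Ω r).Finite := by
  by_contra hinf
  have htile : ENNReal.ofReal (r ^ finrank ℝ E) * μ F ≠ 0 :=
    mul_ne_zero (by simp [hr]) (hF.measure_ne_zero μ)
  obtain ⟨n, hn⟩ := ENNReal.exists_nat_mul_gt htile hΩ
  obtain ⟨s, hs, rfl⟩ := Set.Infinite.exists_subset_card_eq hinf n
  exact (hF.card_mul_le_measure μ hFm hr hs).not_gt hn

theorem natCard_tilesInside_mul_le [Countable Λ] (hF : TilesByTranslates F Λ)
    (hFm : MeasurableSet F) (hΩ : μ Ω ≠ ∞) (hr : 0 < r) :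
    Nat.card (tilesInside Λ F Ω r) * (ENNReal.ofReal (r ^ finrank ℝ E) * μ F) ≤ μ Ω := by
  have hfin := hF.finite_tilesInside μ hFm hΩ hr
  rw [Nat.card_coe_set_eq, Set.ncard_eq_toFinset_card _ hfin]
  exact hF.card_mul_le_measure μ hFm hr hfin.coe_toFinset.subset

theorem le_natCard_tilesInside_mul_add [Countable Λ] (hF : TilesByTranslates F Λ)
    (hFm : MeasurableSet F) (hFb : Bornology.IsBounded F) (hΩ : μ Ω ≠ ∞) (hr : 0 < r) :
    μ Ω ≤ Nat.card (tilesInside Λ F Ω r) * (ENNReal.ofReal (r ^ finrank ℝ E) * μ F) +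
      μ (cthickening (r * diam F) (frontier Ω)) := by
  have hfin := hF.finite_tilesInside μ hFm hΩ hr
  have hcover : Ω ⊆ (⋃ l ∈ hfin.toFinset, r • ((l : E) +ᵥ F)) ∪
      cthickening (r * diam F) (frontier Ω) := by
    intro x hx
    obtain ⟨l, hxl⟩ := hF.exists_mem_smul_vadd hr.ne' x
    by_cases hl : l ∈ tilesInside Λ F Ω r
    · exact Or.inl (Set.mem_biUnion (hfin.mem_toFinset.2 hl) hxl)
    · obtain ⟨y, hyl, hyΩ⟩ := Set.not_subset.1 hl
      refine Or.inr (mem_cthickening_frontier_of_dist_le hx hyΩ ?_)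
      have hdiam : diam (r • ((l : E) +ᵥ F)) = r * diam F := by
        rw [diam_smul₀, diam_vadd, Real.norm_of_nonneg hr.le]
      exact hdiam ▸ dist_le_diam_of_mem ((hFb.vadd _).smul₀ r) hxl hyl
  calc μ Ω ≤ _ := measure_mono hcover
    _ ≤ _ := measure_union_le _ _
    _ = _ := by rw [hF.measure_biUnion_smul_vadd μ hFm hr, Nat.card_coe_set_eq,
      Set.ncard_eq_toFinset_card _ hfin]

theorem tendsto_natCard_tilesInside_mul_pow [Countable Λ] (hF : TilesByTranslates F Λ)
    (hFm : MeasurableSet F) (hFb : Bornology.IsBounded F) (hΩb : Bornology.IsBounded Ω)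
    (hΩfr : μ (frontier Ω) = 0) :
    Tendsto (fun r => Nat.card (tilesInside Λ F Ω r) * r ^ finrank ℝ E) (𝓝[>] 0)
      (𝓝 ((μ Ω).toReal / (μ F).toReal)) := by
  have hΩ : μ Ω ≠ ∞ := hΩb.measure_lt_top.ne
  have hF0 : (μ F).toReal ≠ 0 :=
    ENNReal.toReal_ne_zero.2 ⟨hF.measure_ne_zero μ, hFb.measure_lt_top.ne⟩
  have hfr : Bornology.IsBounded (frontier Ω) := hΩb.closure.subset frontier_subset_closure
  have hboundary : Tendsto (fun r => (μ (cthickening (r * diam F) (frontier Ω))).toReal)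
      (𝓝[>] 0) (𝓝 0) := by
    have hthick := tendsto_measure_cthickening_of_isClosed (μ := μ)
      ⟨1, one_pos, hfr.cthickening.measure_lt_top.ne⟩ isClosed_frontier
    have hscale : Tendsto (fun r : ℝ => r * diam F) (𝓝[>] 0) (𝓝 0) :=
      tendsto_nhdsWithin_of_tendsto_nhds <| by
        simpa using (continuous_mul_const (diam F)).tendsto 0
    simpa [hΩfr, Function.comp_def] using
      (ENNReal.tendsto_toReal ENNReal.zero_ne_top).comp ((hΩfr ▸ hthick).comp hscale)
  suffices Tendsto (fun r => Nat.card (tilesInside Λ F Ω r) * r ^ finrank ℝ E * (μ F).toReal)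
      (𝓝[>] 0) (𝓝 (μ Ω).toReal) by
    simpa [hF0] using this.div_const (μ F).toReal
  refine tendsto_of_tendsto_of_tendsto_of_le_of_le'
    (by simpa using tendsto_const_nhds.sub hboundary) tendsto_const_nhds ?_ ?_
  all_goals filter_upwards [self_mem_nhdsWithin] with r hr
  · have hinner := ((hF.natCard_tilesInside_mul_le μ hFm hΩ hr).trans_lt hΩ.lt_top).ne
    have hthick : μ (cthickening (r * diam F) (frontier Ω)) ≠ ∞ :=
      hfr.cthickening.measure_lt_top.ne
    have h := ENNReal.toReal_mono (ENNReal.add_ne_top.2 ⟨hinner, hthick⟩)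
      (hF.le_natCard_tilesInside_mul_add μ hFm hFb hΩ hr)
    rw [ENNReal.toReal_add hinner hthick,
      ENNReal.toReal_natCast_mul_ofReal_mul _ (pow_pos hr _).le] at h
    linarith
  · have h := ENNReal.toReal_mono hΩ (hF.natCard_tilesInside_mul_le μ hFm hΩ hr)
    rwa [ENNReal.toReal_natCast_mul_ofReal_mul _ (pow_pos hr _).le] at h

end TilesByTranslates

end Tiling

theorem lattice_translate_counting_general (d : ℕ)
    (Λ₀ : Submodule ℤ (EuclideanSpace ℝ (Fin d))) [DiscreteTopology Λ₀]
    (F : Set (EuclideanSpace ℝ (Fin d)))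
    (hFbdd : Bornology.IsBounded F) (hFmeas : MeasurableSet F)
    (hFund : ∀ x : EuclideanSpace ℝ (Fin d),
      ∃! l : Λ₀, x - (l : EuclideanSpace ℝ (Fin d)) ∈ F)
    (Ω : Set (EuclideanSpace ℝ (Fin d)))
    (hΩbdd : Bornology.IsBounded Ω)
    (hΩfr : volume (frontier Ω) = 0)
    (N : ℕ → ℕ)
    (hN : ∀ m : ℕ, N m = Nat.card
      {l : Λ₀ // ∀ x ∈ F, (m : ℝ)⁻¹ • ((l : EuclideanSpace ℝ (Fin d)) + x) ∈ Ω}) :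
    Tendsto (fun m : ℕ => (N m : ℝ) / (m : ℝ) ^ d) atTop
      (nhds ((volume Ω).toReal / (volume F).toReal)) := by
  have : Countable (Λ₀ : Set (EuclideanSpace ℝ (Fin d))) :=
    TopologicalSpace.separableSpace_iff_countable.1 inferInstance
  have hlim := (TilesByTranslates.tendsto_natCard_tilesInside_mul_pow volume hFund hFmeas hFbdd
    hΩbdd hΩfr).comp (tendsto_inv_atTop_nhdsGT_zero.comp tendsto_natCast_atTop_atTop)
  refine hlim.congr fun m => ?_
  rw [Function.comp_apply, Function.comp_apply, hN, finrank_euclideanSpace_fin, inv_pow,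
    div_eq_mul_inv, Nat.card_congr (Equiv.subtypeEquivRight fun l => mem_tilesInside_iff)]
  rfl

/-- Let `F ⊂ ℝ^d` be a bounded measurable fundamental domain of a
complete lattice `Λ₀` (so `ℝ^d` is the disjoint union of the translates `λ + F`,
`λ ∈ Λ₀`), and let `Ω ⊂ ℝ^d` be a bounded measurable set whose boundary has measure zero.
Then the number `N_m` of lattice points `λ ∈ (1/m)Λ₀` with `λ + (1/m)F ⊆ Ω` satisfies
`lim_{m→∞} N_m / m^d = vol(Ω) / vol(F)`. -/
theorem lattice_translate_counting (d : ℕ)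
    (Λ₀ : Submodule ℤ (EuclideanSpace ℝ (Fin d))) [DiscreteTopology Λ₀] [IsZLattice ℝ Λ₀]
    (F : Set (EuclideanSpace ℝ (Fin d)))
    (hFbdd : Bornology.IsBounded F) (hFmeas : MeasurableSet F)
    (hFund : ∀ x : EuclideanSpace ℝ (Fin d),
      ∃! l : Λ₀, x - (l : EuclideanSpace ℝ (Fin d)) ∈ F)
    (Ω : Set (EuclideanSpace ℝ (Fin d)))
    (hΩbdd : Bornology.IsBounded Ω) (hΩmeas : MeasurableSet Ω)
    (hΩfr : volume (frontier Ω) = 0)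
    (N : ℕ → ℕ)
    (hN : ∀ m : ℕ, N m = Nat.card
      {l : Λ₀ // ∀ x ∈ F, (m : ℝ)⁻¹ • ((l : EuclideanSpace ℝ (Fin d)) + x) ∈ Ω}) :
    Tendsto (fun m : ℕ => (N m : ℝ) / (m : ℝ) ^ d) atTop
      (nhds ((volume Ω).toReal / (volume F).toReal)) :=
  lattice_translate_counting_general d Λ₀ F hFbdd hFmeas hFund Ω hΩbdd hΩfr N hN
end
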